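/- Let F be a field of characteristic ≠ 2. Suppose A = a₀·1 + a and B = b₀·1 + b in M₂(F) are invertible, A − 1 is invertible, AB ≠ BA, and A, B satisfy the fundamental equation. Suppose furthermore that λ₁, λ₂ ∈ F satisfy λ₁·a + λ₂·b + a×b = 0. Then det(A) = a₀² − λ₂² ≠ 0 and b₀·det(A) = λ₁·(det(A) − tr(A) − 2λ₂); equivalently, a₀ ≠ ±λ₂ and b₀ = λ₁·(1 − 2/(a₀ − λ₂)). -/

import Mathlib

open Matrix

/-- The cross product of traceless 2×2 matrices: `a×b = (ab - ba)/2`. -/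
noncomputable def matCross {F : Type*} [Field F] (a b : Matrix (Fin 2) (Fin 2) F) :
    Matrix (Fin 2) (Fin 2) F :=
  (2 : F)⁻¹ • (a * b - b * a)

/-! For traceless `a, b ∈ M₂(F)` one has `a² = -det a` and `ab + ba = tr(ab)`. Commuting the
relation `λ₁a + λ₂b + a×b = 0` with `a` and with `b`, and using that `a` and `b` are linearly
independent because they do not commute, gives `a² = λ₂²`, `b² = λ₁²` and `tr(ab) = -2λ₁λ₂`;
in particular `det A = a₀² - λ₂²`. Clearing the inverses in the fundamental equation with
adjugates turns it into
  `(2a₀ - det A)(2b²·a - tr(ab)·b) + (tr(ab) - b₀ det A)(ab - ba) = 0`,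
and after substituting the values above and `ab - ba = -2(λ₁a + λ₂b)` the left side is a scalar
multiple of `ab - ba ≠ 0`, so that scalar vanishes. -/

section Algebra

variable {K R : Type*} [Field K] [Ring R] [Algebra K R]

theorem eq_zero_and_eq_zero_of_smul_add_smul_eq_zero {a b : R} (hab : ¬Commute a b) {x y : K}
    (h : x • a + y • b = 0) : x = 0 ∧ y = 0 := by
  have key : ∀ {a b : R} {x y : K}, ¬Commute a b → x • a + y • b = 0 → x = 0 := by
    intro a b x y hab h
    by_contra hx
    have ha : a = (-(x⁻¹ * y)) • b := by
      rw [← inv_smul_smul₀ hx a, eq_neg_of_add_eq_zero_left h, smul_neg, smul_smul, neg_smul]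
    exact hab (ha ▸ (Commute.refl b).smul_left _)
  exact ⟨key hab h, key (mt Commute.symm hab) (by rwa [add_comm])⟩

theorem commutator_eq_of_cross_relation (h2 : (2 : K) ≠ 0) {a b : R} {l₁ l₂ : K}
    (hrel : l₁ • a + l₂ • b + (2⁻¹ : K) • (a * b - b * a) = 0) :
    a * b - b * a = (-2 * l₁) • a + (-2 * l₂) • b := by
  have := congrArg ((2 : K) • ·) hrel
  simp only [smul_add, smul_smul, mul_inv_cancel₀ h2, one_smul, smul_zero] at this
  linear_combination (norm := module) this

theorem scalars_eq_of_cross_relation (h2 : (2 : K) ≠ 0) {a b : R} {α β τ l₁ l₂ : K}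
    (haa : a * a = α • 1) (hbb : b * b = β • 1) (hab : a * b + b * a = τ • 1)
    (hnc : ¬Commute a b) (hrel : l₁ • a + l₂ • b + (2⁻¹ : K) • (a * b - b * a) = 0) :
    α = l₂ ^ 2 ∧ β = l₁ ^ 2 ∧ τ = -2 * l₁ * l₂ := by
  have hc := commutator_eq_of_cross_relation h2 hrel
  have haba : a * b * a = τ • a - α • b := by
    rw [eq_sub_of_add_eq hab, sub_mul, smul_mul_assoc, one_mul, mul_assoc, haa, mul_smul_comm,
      mul_one]
  have hbab : b * a * b = τ • b - β • a := by
    rw [eq_sub_of_add_eq' hab, sub_mul, smul_mul_assoc, one_mul, mul_assoc, hbb, mul_smul_comm,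
      mul_one]
  have hca : a * (a * b - b * a) - (a * b - b * a) * a = (4 * α) • b - (2 * τ) • a := by
    calc _ = (a * a) * b - 2 • (a * b * a) + b * (a * a) := by noncomm_ring
      _ = _ := by rw [haa, haba, smul_mul_assoc, one_mul, mul_smul_comm, mul_one]; module
  have hcb : b * (a * b - b * a) - (a * b - b * a) * b = (2 * τ) • b - (4 * β) • a := by
    calc _ = 2 • (b * a * b) - (b * b) * a - a * (b * b) := by noncomm_ring
      _ = _ := by rw [hbb, hbab, smul_mul_assoc, one_mul, mul_smul_comm, mul_one]; module
  have hca' : a * (a * b - b * a) - (a * b - b * a) * a = (-2 * l₂) • (a * b - b * a) := by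
    nth_rw 1 [hc]; nth_rw 1 [hc]
    simp only [mul_add, add_mul, mul_smul_comm, smul_mul_assoc]; module
  have hcb' : b * (a * b - b * a) - (a * b - b * a) * b = (2 * l₁) • (a * b - b * a) := by
    nth_rw 1 [hc]; nth_rw 1 [hc]
    simp only [mul_add, add_mul, mul_smul_comm, smul_mul_assoc]; module
  rw [hca, hc] at hca'
  rw [hcb, hc] at hcb'
  obtain ⟨hτ, hα⟩ := eq_zero_and_eq_zero_of_smul_add_smul_eq_zero hnc
    (x := -2 * τ - 4 * l₁ * l₂) (y := 4 * α - 4 * l₂ ^ 2)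
    (by linear_combination (norm := module) hca')
  obtain ⟨hβ, -⟩ := eq_zero_and_eq_zero_of_smul_add_smul_eq_zero hnc
    (x := 4 * l₁ ^ 2 - 4 * β) (y := 2 * τ + 4 * l₁ * l₂)
    (by linear_combination (norm := module) hcb')
  have h4 : (2 : K) * 2 ≠ 0 := mul_ne_zero h2 h2
  exact ⟨mul_left_cancel₀ h4 (by linear_combination hα),
    mul_left_cancel₀ h4 (by linear_combination -hβ),
    mul_left_cancel₀ h2 (by linear_combination -hτ)⟩

end Algebra

namespace Matrix

variable {R : Type*} [CommRing R]

theorem exists_eq_fin_two_of_trace_eq_zero {a : Matrix (Fin 2) (Fin 2) R} (ha : a.trace = 0) :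
    ∃ p q r, a = !![p, q; r, -p] :=
  ⟨a 0 0, a 0 1, a 1 0, by
    rw [trace_fin_two] at ha
    ext i j; fin_cases i <;> fin_cases j <;> simp [eq_neg_of_add_eq_zero_right ha]⟩

theorem smul_one_add_fin_two_of (x p q r : R) :
    x • (1 : Matrix (Fin 2) (Fin 2) R) + !![p, q; r, -p] = !![x + p, q; r, x - p] := by
  ext i j; fin_cases i <;> fin_cases j <;> simp; ring

theorem mul_self_fin_two_of_trace_eq_zero {a : Matrix (Fin 2) (Fin 2) R} (ha : a.trace = 0) :
    a * a = (-a.det) • 1 := by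
  obtain ⟨p, q, r, rfl⟩ := exists_eq_fin_two_of_trace_eq_zero ha
  ext i j; fin_cases i <;> fin_cases j <;> simp <;> ring

theorem mul_add_mul_fin_two_of_trace_eq_zero {a b : Matrix (Fin 2) (Fin 2) R} (ha : a.trace = 0)
    (hb : b.trace = 0) : a * b + b * a = (a * b).trace • 1 := by
  obtain ⟨p, q, r, rfl⟩ := exists_eq_fin_two_of_trace_eq_zero ha
  obtain ⟨s, u, v, rfl⟩ := exists_eq_fin_two_of_trace_eq_zero hb
  ext i j; fin_cases i <;> fin_cases j <;> simp <;> ring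

theorem det_smul_one_add_fin_two_of_trace_eq_zero {a : Matrix (Fin 2) (Fin 2) R}
    (ha : a.trace = 0) (x : R) : (x • 1 + a).det = x ^ 2 + a.det := by
  obtain ⟨p, q, r, rfl⟩ := exists_eq_fin_two_of_trace_eq_zero ha
  rw [smul_one_add_fin_two_of, det_fin_two_of, det_fin_two_of]; ring

theorem adjugate_fundamental_sub_eq_fin_two {a b A B : Matrix (Fin 2) (Fin 2) R}
    (ha : a.trace = 0) (hb : b.trace = 0) {a₀ b₀ : R} (hA : A = a₀ • 1 + a)
    (hB : B = b₀ • 1 + b) :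
    A.adjugate * B.adjugate * A * B - A.det • (B.adjugate * A * B)
      - (B * A.adjugate * B.adjugate * A - (A.det * B.det) • A)
      = (2 * a₀ - A.det) • ((-2 * b.det) • a - (a * b).trace • b)
        + ((a * b).trace - A.det * b₀) • (a * b - b * a) := by
  obtain ⟨p, q, r, rfl⟩ := exists_eq_fin_two_of_trace_eq_zero ha
  obtain ⟨s, u, v, rfl⟩ := exists_eq_fin_two_of_trace_eq_zero hb
  subst hA hB
  simp only [smul_one_add_fin_two_of, adjugate_fin_two_of, det_fin_two_of, mul_fin_two,
    trace_fin_two_of, smul_of]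
  ext i j
  fin_cases i <;> fin_cases j <;> simp <;> ring

end Matrix

theorem fundamental_eq_clear_inverses {n F : Type*} [Fintype n] [DecidableEq n] [Field F]
    {A B : Matrix n n F} (hA : A.det ≠ 0) (hB : B.det ≠ 0)
    (hfund : A⁻¹ * B⁻¹ * A * B - B⁻¹ * A * B = B * A⁻¹ * B⁻¹ * A - A) :
    A.adjugate * B.adjugate * A * B - A.det • (B.adjugate * A * B)
      = B * A.adjugate * B.adjugate * A - (A.det * B.det) • A := by
  have hadj : ∀ M : Matrix n n F, M.det ≠ 0 → M.adjugate = M.det • M⁻¹ := fun M hM => by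
    rw [inv_def, Ring.inverse_eq_inv', smul_smul, mul_inv_cancel₀ hM, one_smul]
  rw [hadj A hA, hadj B hB]
  simp only [smul_mul_assoc, mul_smul_comm, smul_smul]
  linear_combination (norm := module) (A.det * B.det) • hfund

theorem stmt15_general {F : Type*} [Field F] (h2 : (2 : F) ≠ 0)
    (a₀ b₀ : F) (a b A B : Matrix (Fin 2) (Fin 2) F)
    (ha : a.trace = 0) (hb : b.trace = 0)
    (hAdef : A = a₀ • (1 : Matrix (Fin 2) (Fin 2) F) + a)
    (hBdef : B = b₀ • (1 : Matrix (Fin 2) (Fin 2) F) + b)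
    (hA : IsUnit A) (hB : IsUnit B)
    (hnc : A * B ≠ B * A)
    (hfund : A⁻¹ * B⁻¹ * A * B - B⁻¹ * A * B = B * A⁻¹ * B⁻¹ * A - A)
    (l₁ l₂ : F) (hrel : l₁ • a + l₂ • b + matCross a b = 0) :
    (A.det = a₀ ^ 2 - l₂ ^ 2 ∧ A.det ≠ 0 ∧
        b₀ * A.det = l₁ * (A.det - A.trace - 2 * l₂)) ∧
      (a₀ ≠ l₂ ∧ a₀ ≠ -l₂ ∧ b₀ = l₁ * (1 - 2 / (a₀ - l₂))) := by
  have hab : ¬Commute a b := fun h => hnc <| by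
    rw [hAdef, hBdef]
    exact ((Commute.one_left _).smul_left a₀).add_left
      (((Commute.one_right a).smul_right b₀).add_right h)
  obtain ⟨hα, hβ, hτ⟩ := scalars_eq_of_cross_relation h2 (mul_self_fin_two_of_trace_eq_zero ha)
    (mul_self_fin_two_of_trace_eq_zero hb) (mul_add_mul_fin_two_of_trace_eq_zero ha hb) hab hrel
  have hdet : A.det = a₀ ^ 2 - l₂ ^ 2 := by
    rw [hAdef, det_smul_one_add_fin_two_of_trace_eq_zero ha]; linear_combination -hα
  have htr : A.trace = 2 * a₀ := by simp [hAdef, ha]; ring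
  have hd : A.det ≠ 0 := ((isUnit_iff_isUnit_det A).mp hA).ne_zero
  have hE := sub_eq_zero.mpr
    (fundamental_eq_clear_inverses hd ((isUnit_iff_isUnit_det B).mp hB).ne_zero hfund)
  rw [adjugate_fundamental_sub_eq_fin_two ha hb hAdef hBdef] at hE
  have hK : (A.det * b₀ + (2 * a₀ - A.det + 2 * l₂) * l₁) • (a * b - b * a) = 0 := by
    linear_combination (norm := module) -hE + (2 * (2 * a₀ - A.det)) • hβ • a
      - (2 * a₀ - A.det) • hτ • b + hτ • (a * b - b * a)
      + ((2 * a₀ - A.det) * l₁) • commutator_eq_of_cross_relation h2 hrel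
  have hK0 := (smul_eq_zero.mp hK).resolve_right (sub_ne_zero.mpr hab)
  have hfac : A.det = (a₀ + l₂) * (a₀ - l₂) := by rw [hdet]; ring
  obtain ⟨hsum, hdiff⟩ := mul_ne_zero_iff.mp (hfac ▸ hd)
  have hb₀ : b₀ * (a₀ - l₂) = l₁ * (a₀ - l₂ - 2) :=
    mul_left_cancel₀ hsum (by linear_combination hK0 - (b₀ - l₁) * hfac)
  refine ⟨⟨hdet, hd, by rw [htr]; linear_combination hK0⟩, sub_ne_zero.mp hdiff,
    by rwa [← sub_ne_zero, sub_neg_eq_add], ?_⟩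
  field_simp
  linear_combination hb₀

/-- for non-commuting invertible solutions `A = a₀·1 + a`,
`B = b₀·1 + b` of the fundamental equation with `A − 1` invertible and a
relation `λ₁a + λ₂b + a×b = 0`, one has `det A = a₀² − λ₂² ≠ 0` and
`b₀ det A = λ₁(det A − tr A − 2λ₂)`; equivalently `a₀ ≠ ±λ₂` and
`b₀ = λ₁(1 − 2/(a₀ − λ₂))`. -/
theorem stmt15 {F : Type*} [Field F] (h2 : (2 : F) ≠ 0)
    (a₀ b₀ : F) (a b A B : Matrix (Fin 2) (Fin 2) F)
    (ha : a.trace = 0) (hb : b.trace = 0)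
    (hAdef : A = a₀ • (1 : Matrix (Fin 2) (Fin 2) F) + a)
    (hBdef : B = b₀ • (1 : Matrix (Fin 2) (Fin 2) F) + b)
    (hA : IsUnit A) (hB : IsUnit B) (hA1 : IsUnit (A - 1))
    (hnc : A * B ≠ B * A)
    (hfund : A⁻¹ * B⁻¹ * A * B - B⁻¹ * A * B = B * A⁻¹ * B⁻¹ * A - A)
    (l₁ l₂ : F) (hrel : l₁ • a + l₂ • b + matCross a b = 0) :
    (A.det = a₀ ^ 2 - l₂ ^ 2 ∧ A.det ≠ 0 ∧
        b₀ * A.det = l₁ * (A.det - A.trace - 2 * l₂)) ∧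
      (a₀ ≠ l₂ ∧ a₀ ≠ -l₂ ∧ b₀ = l₁ * (1 - 2 / (a₀ - l₂))) :=
  stmt15_general h2 a₀ b₀ a b A B ha hb hAdef hBdef hA hB hnc hfund l₁ l₂ hrel
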